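/- The space of all GENEOs from ((Φ₁,‖·‖_{V₁}),G₁) to ((Φ₂,‖·‖_{V₂}),G₂) is compact with respect to the metric induced by the norm |||·|||_{L²}; in particular, every sequence of GENEOs admits a subsequence converging in |||·|||_{L²} to a GENEO. -/

import Mathlib

/-!
A GENEO is a 1-Lipschitz map from the compact set `Φ₁` into the compact set `Φ₂`, so by
Arzelà–Ascoli every sequence of GENEOs has a subsequence converging uniformly on `Φ₁`. All the
defining conditions of a GENEO pass to pointwise limits (equivariance because each `ρ₂ g`
preserves the inner product, hence is an isometry), so the limit is again a GENEO. Finally,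
uniform convergence on `Φ₁` controls the `L²` norm because `f₁` is a probability density.
-/

open MeasureTheory Filter Topology RealInnerProductSpace

noncomputable section

/-- The topology on a set induced by a pseudo-distance `d`, generated by the open balls. -/
def distTopology {X : Type*} (d : X → X → ℝ) : TopologicalSpace X :=
  TopologicalSpace.generateFrom {s : Set X | ∃ x r, s = {y | d x y < r}}

open scoped NNReal

theorem isometry_of_inner_map_map {E F : Type*} [NormedAddCommGroup E] [InnerProductSpace ℝ E]
    [NormedAddCommGroup F] [InnerProductSpace ℝ F] {f : E → F}
    (hf : ∀ x y, ⟪f x, f y⟫ = ⟪x, y⟫) : Isometry f := by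
  refine Isometry.of_dist_eq fun x y => ?_
  have hsq : ‖f x - f y‖ ^ 2 = ‖x - y‖ ^ 2 := by
    simp only [← real_inner_self_eq_norm_sq, inner_sub_left, inner_sub_right, hf]
  rwa [dist_eq_norm, dist_eq_norm, ← pow_left_inj₀ (norm_nonneg _) (norm_nonneg _) two_ne_zero]

theorem ContinuousMap.isCompact_setOf_lipschitzWith_mem {X Y : Type*} [PseudoEMetricSpace X]
    [PseudoEMetricSpace Y] (K : ℝ≥0) {B : Set Y} (hB : IsCompact B) :
    IsCompact {g : C(X, Y) | LipschitzWith K g ∧ ∀ x, g x ∈ B} := by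
  refine ArzelaAscoli.isCompact_of_equicontinuous _ ?_
    (LipschitzWith.uniformEquicontinuous _ K fun g => g.2.1).equicontinuous
  have himage : ContinuousMap.toFun '' {g : C(X, Y) | LipschitzWith K g ∧ ∀ x, g x ∈ B} =
      {f | LipschitzWith K f} ∩ Set.univ.pi fun _ => B := by
    ext f
    simp only [Set.mem_image, Set.mem_inter_iff, Set.mem_ofPred_eq, Set.mem_univ_pi]
    refine ⟨?_, fun hf => ⟨⟨f, hf.1.continuous⟩, hf, rfl⟩⟩
    rintro ⟨g, hg, rfl⟩
    exact hg
  rw [himage]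
  exact (isCompact_univ_pi fun _ => hB).inter_left (isClosed_setOfPred_lipschitzWith K)

theorem sqrt_setIntegral_sq_norm_mul_le {α E : Type*} [MeasurableSpace α] [NormedAddCommGroup E]
    {μ : Measure α} {s : Set α} {w : α → ℝ} {H : α → E} {c : ℝ} (hc : 0 ≤ c)
    (hs : MeasurableSet s) (hw0 : ∀ x, 0 ≤ w x) (hw : Integrable w μ) (hw1 : ∫ x, w x ∂μ ≤ 1)
    (hH : ∀ x ∈ s, ‖H x‖ ≤ c) :
    √(∫ x in s, ‖H x‖ ^ 2 * w x ∂μ) ≤ c := by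
  refine Real.sqrt_le_iff.2 ⟨hc, ?_⟩
  calc ∫ x in s, ‖H x‖ ^ 2 * w x ∂μ
      ≤ ∫ x in s, c ^ 2 * w x ∂μ := by
        refine integral_mono_of_nonneg (.of_forall fun x => mul_nonneg (sq_nonneg _) (hw0 x))
          (hw.restrict.const_mul _) ?_
        filter_upwards [ae_restrict_mem hs] with x hx
        gcongr
        · exact hw0 x
        · exact hH x hx
    _ = c ^ 2 * ∫ x in s, w x ∂μ := integral_const_mul _ _
    _ ≤ c ^ 2 * 1 := by
        gcongr
        exact (setIntegral_le_integral hw (.of_forall hw0)).trans hw1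
    _ = c ^ 2 := mul_one _

theorem TendstoUniformlyOn.tendsto_sqrt_setIntegral_sq_norm_sub_mul {α E ι : Type*}
    [MeasurableSpace α] [NormedAddCommGroup E] {μ : Measure α} {s : Set α} {w : α → ℝ}
    {l : Filter ι} {F : ι → α → E} {F₀ : α → E} (h : TendstoUniformlyOn F F₀ l s)
    (hs : MeasurableSet s) (hw0 : ∀ x, 0 ≤ w x) (hw : Integrable w μ) (hw1 : ∫ x, w x ∂μ ≤ 1) :
    Tendsto (fun i => √(∫ x in s, ‖(F i - F₀) x‖ ^ 2 * w x ∂μ)) l (𝓝 0) := by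
  rw [Metric.tendsto_nhds]
  intro ε hε
  filter_upwards [Metric.tendstoUniformlyOn_iff.1 h (ε / 2) (half_pos hε)] with i hi
  rw [Real.dist_eq, sub_zero, abs_of_nonneg (Real.sqrt_nonneg _)]
  refine (sqrt_setIntegral_sq_norm_mul_le (half_pos hε).le hs hw0 hw hw1 fun x hx => ?_).trans_lt
    (half_lt_self hε)
  rw [Pi.sub_apply, ← dist_eq_norm, dist_comm]
  exact (hi x hx).le

theorem lipschitzOnWith_one_iff_norm_sub_le {E F : Type*} [SeminormedAddCommGroup E]
    [SeminormedAddCommGroup F] {f : E → F} {s : Set E} :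
    LipschitzOnWith 1 f s ↔ ∀ x ∈ s, ∀ y ∈ s, ‖f x - f y‖ ≤ ‖x - y‖ := by
  simp only [lipschitzOnWith_iff_norm_sub_le, NNReal.coe_one, one_mul]

section GENEO

variable {V₁ V₂ G : Type*} [NormedAddCommGroup V₁] [NormedAddCommGroup V₂]

def IsGENEOOn (Φ₁ : Set V₁) (Φ₂ : Set V₂) (a : G → V₁ → V₁) (b : G → V₂ → V₂) (F : V₁ → V₂) :
    Prop :=
  ContinuousOn F Φ₁ ∧ Set.MapsTo F Φ₁ Φ₂ ∧ (∀ g, ∀ φ ∈ Φ₁, F (a g φ) = b g (F φ)) ∧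
    ∀ φ ∈ Φ₁, ∀ φ' ∈ Φ₁, ‖F φ - F φ'‖ ≤ ‖φ - φ'‖

variable {Φ₁ : Set V₁} {Φ₂ : Set V₂} {a : G → V₁ → V₁} {b : G → V₂ → V₂}

theorem IsGENEOOn.of_tendsto {ι : Type*} {l : Filter ι} [l.NeBot] (hΦ₂ : IsClosed Φ₂)
    (ha : ∀ g, Set.MapsTo (a g) Φ₁ Φ₁) (hb : ∀ g, Continuous (b g)) {F : ι → V₁ → V₂}
    {F₀ : V₁ → V₂} (hF : ∀ i, IsGENEOOn Φ₁ Φ₂ a b (F i))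
    (hlim : ∀ φ ∈ Φ₁, Tendsto (fun i => F i φ) l (𝓝 (F₀ φ))) :
    IsGENEOOn Φ₁ Φ₂ a b F₀ := by
  have hnonexp : ∀ φ ∈ Φ₁, ∀ φ' ∈ Φ₁, ‖F₀ φ - F₀ φ'‖ ≤ ‖φ - φ'‖ := fun φ hφ φ' hφ' =>
    le_of_tendsto ((hlim φ hφ).sub (hlim φ' hφ')).norm
      (.of_forall fun i => (hF i).2.2.2 φ hφ φ' hφ')
  refine ⟨(lipschitzOnWith_one_iff_norm_sub_le.2 hnonexp).continuousOn, fun φ hφ => ?_,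
    fun g φ hφ => ?_, hnonexp⟩
  · exact hΦ₂.mem_of_tendsto (hlim φ hφ) (.of_forall fun i => (hF i).2.1 hφ)
  · refine tendsto_nhds_unique (hlim _ (ha g hφ)) ?_
    simpa only [Function.comp_def, (hF _).2.2.1 g φ hφ] using ((hb g).tendsto _).comp (hlim φ hφ)

theorem IsGENEOOn.exists_subseq_tendstoUniformlyOn (hΦ₁ : IsCompact Φ₁) (hΦ₂ : IsCompact Φ₂)
    (ha : ∀ g, Set.MapsTo (a g) Φ₁ Φ₁) (hb : ∀ g, Continuous (b g)) {F : ℕ → V₁ → V₂}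
    (hF : ∀ n, IsGENEOOn Φ₁ Φ₂ a b (F n)) :
    ∃ (s : ℕ → ℕ) (F₀ : V₁ → V₂), StrictMono s ∧ IsGENEOOn Φ₁ Φ₂ a b F₀ ∧
      TendstoUniformlyOn (fun n => F (s n)) F₀ atTop Φ₁ := by
  classical
  have := isCompact_iff_compactSpace.1 hΦ₁
  let restrictF : ℕ → C(Φ₁, V₂) := fun n => ⟨Φ₁.domRestrict (F n), (hF n).1.domRestrict⟩
  have hmem : ∀ n, restrictF n ∈ {g : C(Φ₁, V₂) | LipschitzWith 1 g ∧ ∀ x, g x ∈ Φ₂} :=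
    fun n => ⟨(lipschitzOnWith_one_iff_norm_sub_le.2 (hF n).2.2.2).to_restrict,
      fun x => (hF n).2.1 x.2⟩
  obtain ⟨g, -, s, hs, hlim⟩ :=
    (ContinuousMap.isCompact_setOf_lipschitzWith_mem 1 hΦ₂).tendsto_subseq hmem
  let F₀ : V₁ → V₂ := fun φ => if h : φ ∈ Φ₁ then g ⟨φ, h⟩ else 0
  have hunif : TendstoUniformlyOn (fun n => F (s n)) F₀ atTop Φ₁ := by
    have hF₀ : F₀ ∘ (↑) = g := funext fun x => dif_pos x.2
    rw [tendstoUniformlyOn_iff_tendstoUniformly_comp_coe, hF₀]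
    exact ContinuousMap.tendsto_iff_tendstoUniformly.1 hlim
  exact ⟨s, F₀, hs, .of_tendsto hΦ₂.isClosed ha hb (fun n => hF (s n))
    fun φ hφ => hunif.tendsto_at hφ, hunif⟩

end GENEO

theorem statement18_general
    {V₁ V₂ : Type*}
    [NormedAddCommGroup V₁] [MeasurableSpace V₁] [BorelSpace V₁]
    [NormedAddCommGroup V₂] [InnerProductSpace ℝ V₂]
    (Φ₁ : Set V₁) (Φ₂ : Set V₂)
    (lam₁ : Measure V₁) (f₁ : V₁ → ℝ) (hf₁0 : ∀ φ, 0 ≤ f₁ φ)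
    (hf₁int : Integrable f₁ lam₁) (hf₁1 : ∫ φ, f₁ φ ∂lam₁ = 1)
    (hΦ₁c : IsCompact Φ₁) (hΦ₂c : IsCompact Φ₂)
    {G₁ G₂ : Type*} [Group G₁] [Group G₂]
    (ρ₁ : G₁ → V₁ → V₁) (ρ₂ : G₂ → V₂ → V₂)
    (hρΦ₁ : ∀ (g : G₁), ∀ φ ∈ Φ₁, ρ₁ g φ ∈ Φ₁)
    (hinner₂ : ∀ (g : G₂) (φ φ' : V₂), ⟪ρ₂ g φ, ρ₂ g φ'⟫ = ⟪φ, φ'⟫)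
    (T : G₁ →* G₂)
    (IsGENEO : (V₁ → V₂) → Prop)
    (hIsGENEO : ∀ F : V₁ → V₂, IsGENEO F ↔
      (ContinuousOn F Φ₁ ∧ Set.MapsTo F Φ₁ Φ₂ ∧
        (∀ (g : G₁), ∀ φ ∈ Φ₁, F (ρ₁ g φ) = ρ₂ (T g) (F φ)) ∧
        ∀ φ ∈ Φ₁, ∀ φ' ∈ Φ₁, ‖F φ - F φ'‖ ≤ ‖φ - φ'‖))
    (nL2 : (V₁ → V₂) → ℝ)
    (hnL2 : ∀ F : V₁ → V₂,
      nL2 F = Real.sqrt (∫ φ in Φ₁, ‖F φ‖ ^ 2 * f₁ φ ∂lam₁))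
    :
    ∀ Fseq : ℕ → V₁ → V₂, (∀ n, IsGENEO (Fseq n)) →
      ∃ (s : ℕ → ℕ) (F : V₁ → V₂), StrictMono s ∧ IsGENEO F ∧
        Tendsto (fun n => nL2 (Fseq (s n) - F)) atTop (𝓝 0) := by
  intro Fseq hF
  have hρ₂_cont : ∀ g, Continuous (ρ₂ (T g)) := fun g =>
    (isometry_of_inner_map_map (hinner₂ (T g))).continuous
  obtain ⟨s, F, hs, hF_geneo, hF_lim⟩ :=
    IsGENEOOn.exists_subseq_tendstoUniformlyOn (b := fun g => ρ₂ (T g)) hΦ₁c hΦ₂c hρΦ₁ hρ₂_cont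
      fun n => (hIsGENEO (Fseq n)).1 (hF n)
  refine ⟨s, F, hs, (hIsGENEO F).2 hF_geneo, ?_⟩
  simpa only [hnL2] using
    hF_lim.tendsto_sqrt_setIntegral_sq_norm_sub_mul hΦ₁c.measurableSet hf₁0 hf₁int hf₁1.le

theorem statement18
    {X₁ X₂ : Type*} {V₁ V₂ : Type*}
    [NormedAddCommGroup V₁] [InnerProductSpace ℝ V₁] [FiniteDimensional ℝ V₁]
    [MeasurableSpace V₁] [BorelSpace V₁]
    [NormedAddCommGroup V₂] [InnerProductSpace ℝ V₂] [FiniteDimensional ℝ V₂]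
    [MeasurableSpace V₂] [BorelSpace V₂]
    (ev₁ : V₁ →ₗ[ℝ] (X₁ → ℝ)) (hev₁ : Function.Injective ev₁)
    (ev₂ : V₂ →ₗ[ℝ] (X₂ → ℝ)) (hev₂ : Function.Injective ev₂)
    (hbdd₁ : ∀ φ : V₁, BddAbove (Set.range fun x => |ev₁ φ x|))
    (hbdd₂ : ∀ φ : V₂, BddAbove (Set.range fun x => |ev₂ φ x|))
    (α₁ β₁ α₂ β₂ : ℝ) (hα₁ : 0 < α₁) (hβ₁ : 0 < β₁) (hα₂ : 0 < α₂) (hβ₂ : 0 < β₂)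
    (hnorm₁₁ : ∀ φ : V₁, α₁ * (⨆ x, |ev₁ φ x|) ≤ ‖φ‖)
    (hnorm₁₂ : ∀ φ : V₁, ‖φ‖ ≤ β₁ * (⨆ x, |ev₁ φ x|))
    (hnorm₂₁ : ∀ φ : V₂, α₂ * (⨆ x, |ev₂ φ x|) ≤ ‖φ‖)
    (hnorm₂₂ : ∀ φ : V₂, ‖φ‖ ≤ β₂ * (⨆ x, |ev₂ φ x|))
    (Φ₁ : Set V₁) (Φ₂ : Set V₂)
    (lam₁ : Measure V₁) (f₁ : V₁ → ℝ) (hf₁0 : ∀ φ, 0 ≤ f₁ φ)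
    (hf₁int : Integrable f₁ lam₁) (hf₁1 : ∫ φ, f₁ φ ∂lam₁ = 1)
    (lam₂ : Measure V₂) (f₂ : V₂ → ℝ) (hf₂0 : ∀ φ, 0 ≤ f₂ φ)
    (hf₂int : Integrable f₂ lam₂) (hf₂1 : ∫ φ, f₂ φ ∂lam₂ = 1)
    (hΦ₁supp : Φ₁ = {φ : V₁ | ∀ U : Set V₁, IsOpen U → φ ∈ U →
      0 < (lam₁.withDensity fun ψ => ENNReal.ofReal (f₁ ψ)) U})
    (hΦ₁c : IsCompact Φ₁)
    (hΦ₂supp : Φ₂ = {φ : V₂ | ∀ U : Set V₂, IsOpen U → φ ∈ U →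
      0 < (lam₂.withDensity fun ψ => ENNReal.ofReal (f₂ ψ)) U})
    (hΦ₂c : IsCompact Φ₂)
    {G₁ G₂ : Type*} [Group G₁] [Group G₂]
    (σ₁ : G₁ →* Equiv.Perm X₁) (hσ₁ : Function.Injective σ₁)
    (σ₂ : G₂ →* Equiv.Perm X₂) (hσ₂ : Function.Injective σ₂)
    (ρ₁ : G₁ → V₁ → V₁)
    (hρ₁ : ∀ (g : G₁) (φ : V₁) (x : X₁), ev₁ (ρ₁ g φ) x = ev₁ φ (σ₁ g x))
    (ρ₂ : G₂ → V₂ → V₂)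
    (hρ₂ : ∀ (g : G₂) (φ : V₂) (x : X₂), ev₂ (ρ₂ g φ) x = ev₂ φ (σ₂ g x))
    (hρΦ₁ : ∀ (g : G₁), ∀ φ ∈ Φ₁, ρ₁ g φ ∈ Φ₁)
    (hρΦ₂ : ∀ (g : G₂), ∀ φ ∈ Φ₂, ρ₂ g φ ∈ Φ₂)
    (hinner₁ : ∀ (g : G₁) (φ φ' : V₁), ⟪ρ₁ g φ, ρ₁ g φ'⟫ = ⟪φ, φ'⟫)
    (hinner₂ : ∀ (g : G₂) (φ φ' : V₂), ⟪ρ₂ g φ, ρ₂ g φ'⟫ = ⟪φ, φ'⟫)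
    (hf₁inv : ∀ (g : G₁) (φ : V₁), f₁ (ρ₁ g φ) = f₁ φ)
    (hf₂inv : ∀ (g : G₂) (φ : V₂), f₂ (ρ₂ g φ) = f₂ φ)
    (hlam₁inv : ∀ (g : G₁) (A : Set V₁), MeasurableSet A → lam₁ (ρ₁ g '' A) = lam₁ A)
    (hlam₂inv : ∀ (g : G₂) (A : Set V₂), MeasurableSet A → lam₂ (ρ₂ g '' A) = lam₂ A)
    (T : G₁ →* G₂)
    (IsGENEO : (V₁ → V₂) → Prop)
    (hIsGENEO : ∀ F : V₁ → V₂, IsGENEO F ↔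
      (ContinuousOn F Φ₁ ∧ Set.MapsTo F Φ₁ Φ₂ ∧
        (∀ (g : G₁), ∀ φ ∈ Φ₁, F (ρ₁ g φ) = ρ₂ (T g) (F φ)) ∧
        ∀ φ ∈ Φ₁, ∀ φ' ∈ Φ₁, ‖F φ - F φ'‖ ≤ ‖φ - φ'‖))
    (nL2 : (V₁ → V₂) → ℝ)
    (hnL2 : ∀ F : V₁ → V₂,
      nL2 F = Real.sqrt (∫ φ in Φ₁, ‖F φ‖ ^ 2 * f₁ φ ∂lam₁))
    :
    ∀ Fseq : ℕ → V₁ → V₂, (∀ n, IsGENEO (Fseq n)) →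
      ∃ (s : ℕ → ℕ) (F : V₁ → V₂), StrictMono s ∧ IsGENEO F ∧
        Tendsto (fun n => nL2 (Fseq (s n) - F)) atTop (𝓝 0) :=
  statement18_general Φ₁ Φ₂ lam₁ f₁ hf₁0 hf₁int hf₁1 hΦ₁c hΦ₂c ρ₁ ρ₂ hρΦ₁ hinner₂ T IsGENEO hIsGENEO
    nL2 hnL2
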